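/- arXiv:2405.13618 — 14 statements merged into one kernel-verified Lean document; each statement's English description precedes it below -/
import Mathlib

section
/- For all x > 0 and α with 0 < α ≤ √2/2, α·tanh(x) < arctan(tanh(α·x)). -/
/-!
Let `F t = arctan (tanh (α t)) - α tanh t`. Then `F 0 = 0` and
`F' t = α / cosh (2 α t) - α / cosh² t`, which is positive for `t > 0` because
`2 α t ≤ √2 t` and `cosh (√2 t) < cosh² t`. Differentiating twice more reduces the last
inequality to `cosh (√2 t) < cosh (2 t)`.
-/

open Real Set

lemma pos_of_hasDerivAt_of_pos {f f' : ℝ → ℝ} (hf : ∀ t, HasDerivAt f (f' t) t) (h0 : f 0 = 0)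
    (hf' : ∀ t, 0 < t → 0 < f' t) {x : ℝ} (hx : 0 < x) : 0 < f x := by
  have hmono : StrictMonoOn f (Ici 0) :=
    strictMonoOn_of_hasDerivWithinAt_pos (convex_Ici 0)
      (fun t _ => (hf t).continuousAt.continuousWithinAt) (fun t _ => (hf t).hasDerivWithinAt)
      (fun t ht => hf' t (by rwa [interior_Ici] at ht))
  simpa [h0] using hmono self_mem_Ici hx.le hx

namespace Real

lemma hasDerivAt_tanh (x : ℝ) : HasDerivAt tanh (1 / cosh x ^ 2) x := by
  have h := (hasDerivAt_sinh x).div (hasDerivAt_cosh x) (cosh_pos x).ne'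
  have e : sinh / cosh = tanh := funext fun y => (tanh_eq_sinh_div_cosh y).symm
  rwa [e, ← sq, ← sq, cosh_sq_sub_sinh_sq] at h

lemma hasDerivAt_arctan_tanh (x : ℝ) :
    HasDerivAt (fun y => arctan (tanh y)) (1 / cosh (2 * x)) x := by
  convert (hasDerivAt_tanh x).arctan using 1
  rw [tanh_eq_sinh_div_cosh, cosh_two_mul]
  field_simp [(cosh_pos x).ne']

lemma mul_sinh_mul_lt_mul_sinh_mul {a b t : ℝ} (ha : 0 < a) (hab : a < b) (ht : 0 < t) :
    b * sinh (a * t) < a * sinh (b * t) := by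
  have hb : 0 < b := ha.trans hab
  have hderiv (s : ℝ) : HasDerivAt (fun s => a * sinh (b * s) - b * sinh (a * s))
      (a * b * (cosh (b * s) - cosh (a * s))) s := by
    refine (((((hasDerivAt_id' s).const_mul b).sinh).const_mul a).sub
      ((((hasDerivAt_id' s).const_mul a).sinh).const_mul b)).congr_deriv ?_
    ring
  refine sub_pos.mp (pos_of_hasDerivAt_of_pos hderiv (by simp) (fun s hs => ?_) ht)
  have hcosh : cosh (a * s) < cosh (b * s) := by
    rw [cosh_lt_cosh, abs_of_pos (by positivity), abs_of_pos (by positivity)]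
    gcongr
  have hab_pos : 0 < a * b := by positivity
  nlinarith

lemma cosh_sqrt_two_mul_lt_cosh_sq {t : ℝ} (ht : 0 < t) : cosh (√2 * t) < cosh t ^ 2 := by
  have hsqrt : (0 : ℝ) < √2 := by positivity
  have hsqrt_lt : √2 < 2 := by
    rw [sqrt_lt' two_pos]; norm_num
  have hderiv (s : ℝ) : HasDerivAt (fun s => cosh s ^ 2 - cosh (√2 * s))
      (sinh (2 * s) - √2 * sinh (√2 * s)) s := by
    refine (((hasDerivAt_cosh s).pow 2).sub
      ((hasDerivAt_id' s).const_mul √2).cosh).congr_deriv ?_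
    rw [sinh_two_mul]; push_cast; ring
  refine sub_pos.mp (pos_of_hasDerivAt_of_pos hderiv (by simp) (fun s hs => ?_) ht)
  have h := mul_lt_mul_of_pos_left (mul_sinh_mul_lt_mul_sinh_mul hsqrt hsqrt_lt hs) hsqrt
  rw [← mul_assoc √2 √2, mul_self_sqrt zero_le_two] at h
  linarith

end Real

theorem stmt_0 (x α : ℝ) (hx : 0 < x) (hα : 0 < α) (hα2 : α ≤ Real.sqrt 2 / 2) :
    α * Real.tanh x < Real.arctan (Real.tanh (α * x)) := by
  have hderiv (t : ℝ) : HasDerivAt (fun t => arctan (tanh (α * t)) - α * tanh t)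
      (α / cosh (2 * (α * t)) - α / cosh t ^ 2) t := by
    refine (((hasDerivAt_arctan_tanh (α * t)).comp t ((hasDerivAt_id' t).const_mul α)).sub
      ((hasDerivAt_tanh t).const_mul α)).congr_deriv ?_
    field_simp
  refine sub_pos.mp (pos_of_hasDerivAt_of_pos hderiv (by simp) (fun t ht => ?_) hx)
  have hcosh : cosh (2 * (α * t)) < cosh t ^ 2 := calc
    cosh (2 * (α * t)) ≤ cosh (√2 * t) := by
      rw [cosh_le_cosh, abs_of_pos (by positivity), abs_of_pos (by positivity)]
      nlinarith
    _ < cosh t ^ 2 := cosh_sqrt_two_mul_lt_cosh_sq ht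
  rw [sub_pos]
  gcongr
end

section
/- For all x > 0 and α with 0 < α ≤ √2/2, (cosh(αx))² + (sinh(αx))² < (cosh x)². -/
/-!
Since `cosh² y = 1 + sinh² y`, the claim is `2 sinh² (α x) < sinh² x`, i.e. `sinh (α x) < sinh x / √2`.
As `sinh` is strictly convex on `[0, ∞)` and vanishes at `0`, `sinh (t x) < t sinh x` for `0 < t < 1`;
apply this with `t = α < 1` and use `α ≤ 1 / √2`.
-/

open Real Set

namespace Real

lemma strictConvexOn_sinh : StrictConvexOn ℝ (Ici 0) sinh := by
  refine StrictMonoOn.strictConvexOn_of_deriv (convex_Ici 0) continuous_sinh.continuousOn ?_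
  rw [deriv_sinh]
  exact cosh_strictMonoOn.mono interior_subset

lemma sinh_mul_lt_mul_sinh {t y : ℝ} (ht₀ : 0 < t) (ht₁ : t < 1) (hy : 0 < y) :
    sinh (t * y) < t * sinh y := by
  have h := strictConvexOn_sinh.2 self_mem_Ici hy.le hy.ne (sub_pos.2 ht₁) ht₀ (by ring)
  simpa only [smul_eq_mul, mul_zero, zero_add, sinh_zero] using h

end Real

theorem stmt_1 (x α : ℝ) (hx : 0 < x) (hα : 0 < α) (hα2 : α ≤ Real.sqrt 2 / 2) :
    (Real.cosh (α * x)) ^ 2 + (Real.sinh (α * x)) ^ 2 < (Real.cosh x) ^ 2 := by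
  have hsq : (√2 / 2) ^ 2 = 1 / 2 := by
    rw [div_pow, sq_sqrt zero_le_two]; norm_num
  have hα1 : α < 1 := hα2.trans_lt (by nlinarith [sqrt_nonneg 2])
  have hpos : 0 < sinh (α * x) := sinh_pos_iff.2 (mul_pos hα hx)
  have hlt : sinh (α * x) < α * sinh x := sinh_mul_lt_mul_sinh hα hα1 hx
  have hα_sq : α ^ 2 ≤ 1 / 2 := hsq ▸ pow_le_pow_left₀ hα.le hα2 2
  have hkey : 2 * sinh (α * x) ^ 2 < sinh x ^ 2 := by
    calc 2 * sinh (α * x) ^ 2 < 2 * (α * sinh x) ^ 2 := by gcongr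
      _ = 2 * α ^ 2 * sinh x ^ 2 := by ring
      _ ≤ sinh x ^ 2 := by nlinarith [sq_nonneg (sinh x)]
  rw [cosh_sq', cosh_sq']
  linarith
end

section
/- For fixed positive reals a ≠ b, the map α ↦ L_α(a,b) = 2α·a^α·b^α·(b−a)/(b^{2α}−a^{2α}) is strictly decreasing for α ∈ (0,1]. -/
/-!
With `c = log b - log a`, writing `a ^ α = exp (α log a)` turns `L_α(a, b)` into
`(b - a) / c * g (α c)` with `g u = u / sinh u`, and `(b - a) / c > 0`. Since `sinh` is strictly
convex on `[0, ∞)` and vanishes at `0`, the secant slope `sinh u / u` is strictly increasing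
there, so `g` is strictly decreasing. The case `b < a` follows from the symmetry of `L_α`.
-/

open Real Set

/-- At `a = b` this is `0` (division by zero), not the paper's `L_α(a, a) = a`. -/
noncomputable def meanL (α a b : ℝ) : ℝ :=
  2 * α * a ^ α * b ^ α * (b - a) / (b ^ (2 * α) - a ^ (2 * α))

lemma meanL_comm (α a b : ℝ) : meanL α a b = meanL α b a := by
  rw [meanL, meanL, ← neg_div_neg_eq, neg_sub, ← mul_neg, neg_sub,
    mul_right_comm (2 * α) (a ^ α)]

lemma Real.strictConvexOn_sinh_s3 : StrictConvexOn ℝ (Ici 0) sinh := by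
  refine StrictMonoOn.strictConvexOn_of_deriv (convex_Ici 0) continuous_sinh.continuousOn ?_
  rw [deriv_sinh, interior_Ici]
  exact cosh_strictMonoOn.mono Ioi_subset_Ici_self

lemma Real.strictMonoOn_sinh_div_self : StrictMonoOn (fun u => sinh u / u) (Ioi 0) := by
  intro x hx y hy hxy
  simpa using strictConvexOn_sinh_s3.secant_strict_mono self_mem_Ici (mem_Ici_of_Ioi hx)
    (mem_Ici_of_Ioi hy) hx.ne' hy.ne' hxy

lemma Real.strictAntiOn_self_div_sinh : StrictAntiOn (fun u => u / sinh u) (Ioi 0) := by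
  intro x hx y hy hxy
  have hx_pos : 0 < sinh x / x := div_pos (sinh_pos_iff.2 hx) hx
  have hlt := strictMonoOn_sinh_div_self hx hy hxy
  simpa only [inv_div] using inv_strictAntiOn hx_pos (hx_pos.trans hlt) hlt

lemma Real.sinh_sub_eq (x y : ℝ) :
    sinh (y - x) = (exp (2 * y) - exp (2 * x)) / (2 * exp x * exp y) := by
  rw [sinh_eq, exp_sub, neg_sub, exp_sub, two_mul, two_mul, exp_add, exp_add]
  field_simp

lemma meanL_eq {a b : ℝ} (ha : 0 < a) (hb : 0 < b) (α : ℝ) :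
    meanL α a b = α * (b - a) / sinh (α * (log b - log a)) := by
  rw [meanL, show α * (log b - log a) = log b * α - log a * α by ring, sinh_sub_eq,
    rpow_def_of_pos ha, rpow_def_of_pos hb, rpow_def_of_pos ha, rpow_def_of_pos hb,
    mul_left_comm, mul_left_comm (log a)]
  field_simp

lemma strictAntiOn_meanL {a b : ℝ} (ha : 0 < a) (hab : a < b) :
    StrictAntiOn (fun α => meanL α a b) (Ioi 0) := by
  set c := log b - log a with hc_def
  have hc : 0 < c := sub_pos.2 (log_lt_log ha hab)
  have hL (α : ℝ) : meanL α a b = (b - a) / c * (α * c / sinh (α * c)) := by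
    rw [meanL_eq ha (ha.trans hab), ← hc_def]
    field_simp
  intro x hx y hy hxy
  simp only [hL]
  exact mul_lt_mul_of_pos_left
    (strictAntiOn_self_div_sinh (mul_pos hx hc) (mul_pos hy hc) (mul_lt_mul_of_pos_right hxy hc))
    (div_pos (sub_pos.2 hab) hc)

theorem stmt_3 (a b : ℝ) (ha : 0 < a) (hb : 0 < b) (hab : a ≠ b) :
    StrictAntiOn (fun α : ℝ => 2 * α * a ^ α * b ^ α * (b - a) / (b ^ (2 * α) - a ^ (2 * α)))
      (Set.Ioc 0 1) := by
  show StrictAntiOn (fun α => meanL α a b) _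
  wlog h : a < b generalizing a b
  · simp only [meanL_comm _ a b]
    exact this b a hb ha hab.symm (lt_of_le_of_ne (not_lt.1 h) hab.symm)
  exact (strictAntiOn_meanL ha h).mono Ioc_subset_Ioi_self
end

section
/- For fixed positive reals a ≠ b, the map α ↦ S_α(a,b) = α(b−a)/(2·arctan((b^α−a^α)/(b^α+a^α))) is strictly increasing for α ∈ (0,1]. -/
/-!
By symmetry take `a < b` and put `c = (log b - log a) / 2 > 0`. The quotient
`(b^α - a^α) / (b^α + a^α)` equals `tanh (α c)`, so `S_α(a, b)` is a positive multiple of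
`x / G x` at `x = α c`, where `G = arctan ∘ tanh`. Since `G' x = 1 / cosh (2x)` decreases on
`[0, ∞)` and `G 0 = 0`, `G` is strictly concave there and its secant slope `G x / x` strictly
decreases for `x > 0`.
-/

open Real Set

theorem Real.hasDerivAt_tanh_s4 (x : ℝ) : HasDerivAt tanh (cosh x ^ 2)⁻¹ x := by
  have h := (hasDerivAt_sinh x).div (hasDerivAt_cosh x) (cosh_pos x).ne'
  rw [show sinh / cosh = tanh from funext fun y => (tanh_eq_sinh_div_cosh y).symm] at h
  refine h.congr_deriv ?_
  rw [← sq, ← sq, cosh_sq_sub_sinh_sq, inv_eq_one_div]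

theorem Real.continuous_tanh : Continuous tanh :=
  continuous_iff_continuousAt.mpr fun x => (hasDerivAt_tanh_s4 x).continuousAt

noncomputable def arctanTanh (x : ℝ) : ℝ := arctan (tanh x)

theorem arctanTanh_zero : arctanTanh 0 = 0 := by
  simp [arctanTanh]

theorem arctanTanh_pos {x : ℝ} (hx : 0 < x) : 0 < arctanTanh x := by
  rw [arctanTanh, arctan_pos, tanh_eq_sinh_div_cosh]
  exact div_pos (sinh_pos_iff.mpr hx) (cosh_pos x)

theorem hasDerivAt_arctanTanh (x : ℝ) : HasDerivAt arctanTanh (cosh (2 * x))⁻¹ x := by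
  refine ((hasDerivAt_arctan (tanh x)).comp x (hasDerivAt_tanh_s4 x)).congr_deriv ?_
  rw [cosh_two_mul, tanh_eq_sinh_div_cosh]
  have := cosh_pos x
  field_simp

theorem strictConcaveOn_arctanTanh : StrictConcaveOn ℝ (Ici 0) arctanTanh := by
  refine StrictAntiOn.strictConcaveOn_of_deriv (convex_Ici 0)
    (continuous_arctan.comp continuous_tanh).continuousOn ?_
  rw [interior_Ici]
  intro x (hx : 0 < x) y (hy : 0 < y) hxy
  rw [(hasDerivAt_arctanTanh x).deriv, (hasDerivAt_arctanTanh y).deriv]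
  refine inv_strictAnti₀ (cosh_pos _) ?_
  rw [cosh_lt_cosh, abs_of_pos (by positivity), abs_of_pos (by positivity)]
  linarith

theorem strictMonoOn_div_arctanTanh : StrictMonoOn (fun x => x / arctanTanh x) (Ioi 0) := by
  intro x (hx : 0 < x) y (hy : 0 < y) hxy
  have hslope := strictConcaveOn_arctanTanh.secant_strict_mono self_mem_Ici hx.le hy.le hx.ne'
    hy.ne' hxy
  simp only [arctanTanh_zero, sub_zero] at hslope
  have := arctanTanh_pos hx
  have := arctanTanh_pos hy
  rw [div_lt_div_iff₀ (by positivity) (by positivity)] at hslope ⊢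
  linarith

theorem rpow_sub_rpow_div_rpow_add_rpow {p q : ℝ} (hp : 0 < p) (hq : 0 < q) (α : ℝ) :
    (p ^ α - q ^ α) / (p ^ α + q ^ α) = tanh (α * ((log p - log q) / 2)) := by
  set m := α * ((log p + log q) / 2)
  set d := α * ((log p - log q) / 2)
  have hp' : p ^ α = exp m * exp d := by
    rw [rpow_def_of_pos hp, ← exp_add]; congr 1; ring
  have hq' : q ^ α = exp m * exp (-d) := by
    rw [rpow_def_of_pos hq, ← exp_add]; congr 1; ring
  rw [hp', hq', ← mul_sub, ← mul_add, mul_div_mul_left _ _ (exp_pos m).ne', tanh_eq]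

noncomputable def arctanMean (α a b : ℝ) : ℝ :=
  α * (b - a) / (2 * arctan ((b ^ α - a ^ α) / (b ^ α + a ^ α)))

theorem arctanMean_comm (α a b : ℝ) : arctanMean α a b = arctanMean α b a := by
  rw [arctanMean, arctanMean, ← neg_sub a b, ← neg_sub (a ^ α) (b ^ α), add_comm (b ^ α),
    neg_div, arctan_neg, mul_neg, mul_neg, neg_div_neg_eq]

theorem arctanMean_eq_mul_div_arctanTanh {a b : ℝ} (ha : 0 < a) (hb : 0 < b) (hab : a ≠ b)
    (α : ℝ) :
    arctanMean α a b = (b - a) / (2 * ((log b - log a) / 2)) *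
      (α * ((log b - log a) / 2) / arctanTanh (α * ((log b - log a) / 2))) := by
  have hlog : log b - log a ≠ 0 := sub_ne_zero.mpr fun h => hab (log_injOn_pos hb ha h).symm
  rw [arctanMean, rpow_sub_rpow_div_rpow_add_rpow hb ha, ← arctanTanh]
  field_simp

theorem strictMonoOn_arctanMean_of_lt {a b : ℝ} (ha : 0 < a) (hab : a < b) :
    StrictMonoOn (fun α => arctanMean α a b) (Ioi 0) := by
  have hc : 0 < (log b - log a) / 2 := by linarith [log_lt_log ha hab]
  intro α (hα : 0 < α) β (hβ : 0 < β) hαβ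
  simp only [arctanMean_eq_mul_div_arctanTanh ha (ha.trans hab) hab.ne]
  refine mul_lt_mul_of_pos_left ?_ (div_pos (by linarith) (by linarith))
  exact strictMonoOn_div_arctanTanh (mul_pos hα hc) (mul_pos hβ hc)
    (mul_lt_mul_of_pos_right hαβ hc)

theorem strictMonoOn_arctanMean {a b : ℝ} (ha : 0 < a) (hb : 0 < b) (hab : a ≠ b) :
    StrictMonoOn (fun α => arctanMean α a b) (Ioi 0) := by
  rcases hab.lt_or_gt with hlt | hgt
  · exact strictMonoOn_arctanMean_of_lt ha hlt
  · simpa only [arctanMean_comm _ a b] using strictMonoOn_arctanMean_of_lt hb hgt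

theorem stmt_4 (a b : ℝ) (ha : 0 < a) (hb : 0 < b) (hab : a ≠ b) :
    StrictMonoOn (fun α : ℝ => α * (b - a) / (2 * Real.arctan ((b ^ α - a ^ α) / (b ^ α + a ^ α))))
      (Set.Ioc 0 1) :=
  (strictMonoOn_arctanMean ha hb hab).mono Ioc_subset_Ioi_self
end

section
/- For all x > 0, arcsinh(1+2x) − arcsinh(x√2) − arcsinh(1) < 0. -/
open Real

lemma sinh_arsinh_add_arsinh (a b : ℝ) :
    sinh (arsinh a + arsinh b) = a * √(1 + b ^ 2) + √(1 + a ^ 2) * b := by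
  rw [sinh_add, sinh_arsinh, sinh_arsinh, cosh_arsinh, cosh_arsinh]

lemma arsinh_lt_arsinh_add_arsinh_iff {a b c : ℝ} :
    arsinh c < arsinh a + arsinh b ↔ c < a * √(1 + b ^ 2) + √(1 + a ^ 2) * b := by
  rw [← sinh_lt_sinh, sinh_arsinh, sinh_arsinh_add_arsinh]

theorem stmt_6 (x : ℝ) (hx : 0 < x) :
    Real.arsinh (1 + 2 * x) - Real.arsinh (x * Real.sqrt 2) - Real.arsinh 1 < 0 := by
  have hsq : (x * √2) ^ 2 = 2 * x ^ 2 := by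
    rw [mul_pow, sq_sqrt zero_le_two]; ring
  have one_lt_sqrt : 1 < √(1 + (x * √2) ^ 2) := by
    rw [hsq, lt_sqrt zero_le_one]
    nlinarith
  have key : arsinh (1 + 2 * x) < arsinh (x * √2) + arsinh 1 := by
    rw [arsinh_lt_arsinh_add_arsinh_iff, one_pow, one_add_one_eq_two, mul_assoc,
      mul_self_sqrt zero_le_two]
    linarith
  linarith
end

section
/- For all x > 0, arcsinh(1+2x) − arcsinh(1) < ln(1+2x); equivalently M_5(a,b) < M_1(a,b) for positive a ≠ b, where M_1(a,b) = |b−a|/ln(1+|ln b − ln a|) and M_5(a,b) = |b−a|/(√2(arcsinh(1+|ln b − ln a|) − arcsinh 1)). -/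
/-!
With `arsinh y = log (y + √(1 + y²))`, both inequalities come from `√(1 + y²) < √2 · y` for `y > 1`.
It gives `y + √(1 + y²) < (1 + √2) y`, which is the first inequality after taking logarithms. It also
says that `u ↦ √2 · arsinh u - log u`, whose derivative is `√2 / √(1 + u²) - 1 / u`, is strictly
increasing on `[1, ∞)`; comparing its values at `1` and at `1 + |log b - log a|` gives `M₅ < M₁`.
-/

open Real Set

lemma sqrt_one_add_sq_lt_sqrt_two_mul {y : ℝ} (hy : 1 < y) : √(1 + y ^ 2) < √2 * y := by
  rw [sqrt_lt' (by positivity), mul_pow, sq_sqrt zero_le_two]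
  nlinarith

lemma arsinh_sub_arsinh_one_lt_log {y : ℝ} (hy : 1 < y) : arsinh y - arsinh 1 < log y := by
  have hy₀ : 0 < y := by linarith
  have hlt : y + √(1 + y ^ 2) < (1 + √2) * y := by
    linarith [sqrt_one_add_sq_lt_sqrt_two_mul hy]
  have hlog := log_lt_log (by positivity) hlt
  rw [log_mul (by positivity) hy₀.ne'] at hlog
  rw [arsinh, arsinh, one_pow, one_add_one_eq_two]
  linarith

lemma strictMonoOn_sqrt_two_mul_arsinh_sub_log :
    StrictMonoOn (fun u ↦ √2 * arsinh u - log u) (Ici 1) := by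
  refine strictMonoOn_of_hasDerivWithinAt_pos (convex_Ici 1)
    (f' := fun u ↦ √2 * (√(1 + u ^ 2))⁻¹ - u⁻¹) ?_ (fun u hu ↦ ?_) (fun u hu ↦ ?_)
  · refine ((continuous_const.mul continuous_arsinh).continuousOn).sub
      (continuousOn_log.mono fun u hu ↦ ?_)
    exact ne_of_gt (zero_lt_one.trans_le (mem_Ici.mp hu))
  · rw [interior_Ici] at hu
    exact (((hasDerivAt_arsinh u).const_mul √2).sub
      (hasDerivAt_log (zero_lt_one.trans hu).ne')).hasDerivWithinAt
  · rw [interior_Ici] at hu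
    have hu₀ : 0 < u := zero_lt_one.trans hu
    have hsqrt : 0 < √(1 + u ^ 2) := sqrt_pos.mpr (by positivity)
    rw [sub_pos, ← div_eq_mul_inv, inv_eq_one_div, div_lt_div_iff₀ hu₀ hsqrt, one_mul]
    exact sqrt_one_add_sq_lt_sqrt_two_mul hu

lemma log_lt_sqrt_two_mul_arsinh_sub_arsinh_one {y : ℝ} (hy : 1 < y) :
    log y < √2 * (arsinh y - arsinh 1) := by
  have h := strictMonoOn_sqrt_two_mul_arsinh_sub_log self_mem_Ici (mem_Ici.mpr hy.le) hy
  simp only [log_one, sub_zero] at h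
  linarith

theorem stmt_7 :
    (∀ x : ℝ, 0 < x →
      Real.arsinh (1 + 2 * x) - Real.arsinh 1 < Real.log (1 + 2 * x)) ∧
    (∀ a b : ℝ, 0 < a → 0 < b → a ≠ b →
      |b - a| / (Real.sqrt 2 * (Real.arsinh (1 + |Real.log b - Real.log a|) - Real.arsinh 1)) <
        |b - a| / Real.log (1 + |Real.log b - Real.log a|)) := by
  refine ⟨fun x hx ↦ arsinh_sub_arsinh_one_lt_log (by linarith), fun a b ha hb hab ↦ ?_⟩
  have hlog_ne : log b - log a ≠ 0 :=
    sub_ne_zero.mpr fun h ↦ hab (log_injOn_pos (mem_Ioi.mpr hb) (mem_Ioi.mpr ha) h).symm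
  have hy : 1 < 1 + |log b - log a| := lt_add_of_pos_right 1 (abs_pos.mpr hlog_ne)
  exact div_lt_div_of_pos_left (abs_pos.mpr (sub_ne_zero.mpr hab.symm)) (log_pos hy)
    (log_lt_sqrt_two_mul_arsinh_sub_arsinh_one hy)
end

section
/- For all x > 0, 2(arctan(1+2x) − π/4) < ln(1+2x); equivalently M_1(a,b) < M_3(a,b) for positive a ≠ b, where M_1(a,b) = |b−a|/ln(1+|ln b − ln a|) and M_3(a,b) = |b−a|/(2·arctan(1+|ln b − ln a|) − π/2). -/
/-!
The function `f t = log t - 2 arctan t` has derivative `(t - 1)² / (t (1 + t²))`, so it is strictly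
increasing on `[1, ∞)`; since `f 1 = -π/2`, this gives `2 arctan t - π/2 < log t` for `t > 1`.
Both claims are this inequality, at `t = 1 + 2x` and at `t = 1 + |log b - log a|`; for the second one
the smaller denominator `2 arctan t - π/2` is still positive because `arctan t > arctan 1 = π/4`.
-/

open Real Set

lemma hasDerivAt_log_sub_two_mul_arctan {t : ℝ} (ht : t ≠ 0) :
    HasDerivAt (fun s => log s - 2 * arctan s) (t⁻¹ - 2 * (1 / (1 + t ^ 2))) t :=
  (hasDerivAt_log ht).sub ((hasDerivAt_arctan t).const_mul 2)

lemma strictMonoOn_log_sub_two_mul_arctan :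
    StrictMonoOn (fun t => log t - 2 * arctan t) (Ici 1) := by
  apply strictMonoOn_of_deriv_pos (convex_Ici 1)
  · refine ContinuousOn.sub (continuousOn_log.mono ?_) (by fun_prop)
    intro t (ht : 1 ≤ t)
    exact ne_of_gt (by linarith)
  · intro t ht
    rw [interior_Ici] at ht
    have ht : 1 < t := ht
    have ht0 : 0 < t := by linarith
    rw [(hasDerivAt_log_sub_two_mul_arctan ht0.ne').deriv]
    have hfactor : t⁻¹ - 2 * (1 / (1 + t ^ 2)) = (t - 1) ^ 2 / (t * (1 + t ^ 2)) := by
      field_simp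
      ring
    rw [hfactor]
    have : 0 < t - 1 := by linarith
    positivity

lemma two_mul_arctan_sub_pi_div_two_lt_log {t : ℝ} (ht : 1 < t) :
    2 * arctan t - π / 2 < log t := by
  have h := strictMonoOn_log_sub_two_mul_arctan self_mem_Ici (le_of_lt ht) ht
  simp only [log_one, arctan_one] at h
  linarith

lemma pi_div_two_lt_two_mul_arctan {t : ℝ} (ht : 1 < t) : π / 2 < 2 * arctan t := by
  have h := arctan_strictMono ht
  rw [arctan_one] at h
  linarith

theorem stmt_8 :
    (∀ x : ℝ, 0 < x →
      2 * (Real.arctan (1 + 2 * x) - Real.pi / 4) < Real.log (1 + 2 * x)) ∧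
    (∀ a b : ℝ, 0 < a → 0 < b → a ≠ b →
      |b - a| / Real.log (1 + |Real.log b - Real.log a|) <
        |b - a| / (2 * Real.arctan (1 + |Real.log b - Real.log a|) - Real.pi / 2)) := by
  constructor
  · intro x hx
    have h := two_mul_arctan_sub_pi_div_two_lt_log (t := 1 + 2 * x) (by linarith)
    linarith
  · intro a b ha hb hab
    have hlog : 0 < |log b - log a| := by
      rw [abs_pos, sub_ne_zero]
      exact fun h => hab (log_injOn_pos hb ha h).symm
    have ht : 1 < 1 + |log b - log a| := by linarith
    apply div_lt_div_of_pos_left (abs_pos.mpr (sub_ne_zero.mpr hab.symm))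
    · linarith [pi_div_two_lt_two_mul_arctan ht]
    · exact two_mul_arctan_sub_pi_div_two_lt_log ht
end

section
/- For all x > 0, √2·sinh(x)/arcsinh(x√2) < cosh(x); that is, M_4(a,b) < (a+b)/2 for all positive a ≠ b, where M_4(a,b) = (b−a)/(√2·arcsinh((ln b − ln a)/√2)). -/
/-!
Put `f x = arsinh (c x) - c tanh x` with `0 < c ≤ √2`. Then `f 0 = 0` and
`f' x = c / √(1 + c²x²) - c / cosh² x > 0` for `x > 0`, because
`cosh⁴ x > (1 + x²)² > 1 + 2x² ≥ 1 + c²x²`. For `c = √2` this is `√2 sinh x < cosh x · arsinh (x√2)`,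
and the inequality between means follows by writing `a = e^(m-x)`, `b = e^(m+x)`.
-/

open Real

lemma hasDerivAt_sinh_div_cosh (x : ℝ) :
    HasDerivAt (fun y => sinh y / cosh y) (1 / cosh x ^ 2) x := by
  refine ((hasDerivAt_sinh x).div (hasDerivAt_cosh x) (cosh_pos x).ne').congr_deriv ?_
  rw [← cosh_sq_sub_sinh_sq x]
  ring

lemma hasDerivAt_arsinh_mul_sub_mul_sinh_div_cosh (c x : ℝ) :
    HasDerivAt (fun y => arsinh (c * y) - c * (sinh y / cosh y))
      (c / √(1 + (c * x) ^ 2) - c / cosh x ^ 2) x := by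
  have harsinh := (hasDerivAt_arsinh (c * x)).comp x ((hasDerivAt_id x).const_mul c)
  exact (harsinh.sub ((hasDerivAt_sinh_div_cosh x).const_mul c)).congr_deriv (by ring)

lemma one_add_sq_lt_cosh_sq {x : ℝ} (hx : 0 < x) : 1 + x ^ 2 < cosh x ^ 2 := by
  have hsinh : x < sinh x := self_lt_sinh_iff.2 hx
  nlinarith [cosh_sq' x]

lemma sqrt_one_add_mul_sq_lt_cosh_sq {c x : ℝ} (hc : c ^ 2 ≤ 2) (hx : 0 < x) :
    √(1 + (c * x) ^ 2) < cosh x ^ 2 := by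
  rw [sqrt_lt' (by positivity)]
  have h := one_add_sq_lt_cosh_sq hx
  calc 1 + (c * x) ^ 2 ≤ 1 + 2 * x ^ 2 := by nlinarith [sq_nonneg x]
    _ < (1 + x ^ 2) ^ 2 := by nlinarith [pow_pos hx 4]
    _ < (cosh x ^ 2) ^ 2 := by gcongr

lemma mul_sinh_div_cosh_lt_arsinh_mul {c x : ℝ} (hc₀ : 0 < c) (hc : c ^ 2 ≤ 2) (hx : 0 < x) :
    c * (sinh x / cosh x) < arsinh (c * x) := by
  have hmono : StrictMonoOn (fun y => arsinh (c * y) - c * (sinh y / cosh y)) (Set.Ici 0) := by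
    refine strictMonoOn_of_deriv_pos (convex_Ici 0) ?_ fun y hy => ?_
    · exact HasDerivAt.continuousOn fun y _ => hasDerivAt_arsinh_mul_sub_mul_sinh_div_cosh c y
    · rw [interior_Ici, Set.mem_Ioi] at hy
      rw [(hasDerivAt_arsinh_mul_sub_mul_sinh_div_cosh c y).deriv, sub_pos]
      exact div_lt_div_of_pos_left hc₀ (by positivity) (sqrt_one_add_mul_sq_lt_cosh_sq hc hy)
  simpa using hmono Set.self_mem_Ici hx.le hx

lemma sqrt_two_mul_sinh_lt_cosh_mul_arsinh {x : ℝ} (hx : 0 < x) :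
    √2 * sinh x < cosh x * arsinh (x * √2) := by
  have h := mul_sinh_div_cosh_lt_arsinh_mul (sqrt_pos.2 two_pos) (sq_sqrt zero_le_two).le hx
  rw [mul_div_assoc', div_lt_iff₀ (cosh_pos x), mul_comm _ x] at h
  linarith

lemma sqrt_two_mul_sinh_div_arsinh_lt_cosh {x : ℝ} (hx : x ≠ 0) :
    √2 * sinh x / arsinh (x * √2) < cosh x := by
  rcases hx.lt_or_gt with hneg | hpos
  · have h := sqrt_two_mul_sinh_lt_cosh_mul_arsinh (neg_pos.2 hneg)
    rw [sinh_neg, cosh_neg, neg_mul, arsinh_neg] at h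
    have hA : arsinh (x * √2) < 0 := arsinh_neg_iff.2 (mul_neg_of_neg_of_pos hneg (by positivity))
    rw [div_lt_iff_of_neg hA]
    linarith
  · have hA : 0 < arsinh (x * √2) := arsinh_pos_iff.2 (by positivity)
    rw [div_lt_iff₀ hA]
    exact sqrt_two_mul_sinh_lt_cosh_mul_arsinh hpos

lemma sub_div_sqrt_two_mul_arsinh_lt_add_div_two {a b : ℝ} (ha : 0 < a) (hb : 0 < b) (hab : a ≠ b) :
    (b - a) / (√2 * arsinh ((log b - log a) / √2)) < (a + b) / 2 := by
  set x := (log b - log a) / 2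
  set m := (log a + log b) / 2
  have hx : x ≠ 0 := by
    intro h
    refine hab (log_injOn_pos ha hb ?_)
    simp only [x] at h
    linarith
  have ha' : a = exp m * exp (-x) := by rw [← exp_add, ← exp_log ha]; congr 1; ring
  have hb' : b = exp m * exp x := by rw [← exp_add, ← exp_log hb]; congr 1; ring
  have hsqrt : (√2 : ℝ) * √2 = 2 := mul_self_sqrt zero_le_two
  have hsub : b - a = exp m * (√2 * (√2 * sinh x)) := by
    rw [ha', hb', sinh_eq, ← mul_assoc √2, hsqrt]; ring
  have hadd : (a + b) / 2 = exp m * cosh x := by rw [ha', hb', cosh_eq]; ring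
  have harg : (log b - log a) / √2 = x * √2 := by
    rw [div_eq_iff (by positivity), mul_assoc, hsqrt]
    ring
  rw [hsub, hadd, harg, mul_div_assoc, mul_div_mul_left _ _ (by positivity)]
  exact mul_lt_mul_of_pos_left (sqrt_two_mul_sinh_div_arsinh_lt_cosh hx) (exp_pos m)

theorem stmt_10 :
    (∀ x : ℝ, 0 < x →
      Real.sqrt 2 * Real.sinh x / Real.arsinh (x * Real.sqrt 2) < Real.cosh x) ∧
    (∀ a b : ℝ, 0 < a → 0 < b → a ≠ b →
      (b - a) / (Real.sqrt 2 * Real.arsinh ((Real.log b - Real.log a) / Real.sqrt 2)) <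
        (a + b) / 2) :=
  ⟨fun _ hx => sqrt_two_mul_sinh_div_arsinh_lt_cosh hx.ne',
    fun _ _ ha hb hab => sub_div_sqrt_two_mul_arsinh_lt_add_div_two ha hb hab⟩
end

section
/- For all x > 0, 2·arctan(1+2x) − π/2 < √2·arctan(x√2); equivalently M_2(a,b) < M_3(a,b) for positive a ≠ b, where M_2(a,b) = (b−a)/(√2·arctan((ln b − ln a)/√2)) and M_3(a,b) = |b−a|/(2·arctan(1+|ln b − ln a|) − π/2). -/
/-!
The difference `√2 arctan (x√2) - 2 arctan (1 + 2x) + π/2` vanishes at `0` and its derivative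
`2 / (1 + 2x²) - 4 / (1 + (1 + 2x)²) = 8x / ((1 + 2x²)(1 + (1 + 2x)²))` is positive for `x > 0`.
Both means are symmetric in `a, b` because `arctan` is odd, and the mean inequality is the arctan
inequality at `x = |log b - log a| / 2`.
-/

open Real Set

noncomputable def arctanGap (x : ℝ) : ℝ :=
  √2 * arctan (x * √2) - 2 * arctan (1 + 2 * x)

lemma hasDerivAt_arctanGap (x : ℝ) :
    HasDerivAt arctanGap (2 / (1 + 2 * x ^ 2) - 4 / (1 + (1 + 2 * x) ^ 2)) x := by
  have hx₁ : HasDerivAt (fun y : ℝ => y * √2) √2 x := by simpa using (hasDerivAt_id x).mul_const √2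
  have hx₂ : HasDerivAt (fun y : ℝ => 1 + 2 * y) 2 x := by
    simpa using ((hasDerivAt_id x).const_mul (2 : ℝ)).const_add 1
  refine ((hx₁.arctan.const_mul √2).sub (hx₂.arctan.const_mul 2)).congr_deriv ?_
  have h2 : √2 ^ 2 = 2 := sq_sqrt zero_le_two
  rw [mul_pow, h2]
  field_simp
  rw [h2]
  ring

lemma sub_div_one_add_sq_pos {x : ℝ} (hx : 0 < x) :
    0 < 2 / (1 + 2 * x ^ 2) - 4 / (1 + (1 + 2 * x) ^ 2) := by
  rw [sub_pos, div_lt_div_iff₀ (by positivity) (by positivity)]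
  nlinarith

lemma strictMonoOn_arctanGap : StrictMonoOn arctanGap (Ici 0) := by
  refine strictMonoOn_of_deriv_pos (convex_Ici 0)
    (fun x _ => (hasDerivAt_arctanGap x).continuousAt.continuousWithinAt) fun x hx => ?_
  rw [interior_Ici] at hx
  rw [(hasDerivAt_arctanGap x).deriv]
  exact sub_div_one_add_sq_pos hx

lemma arctanGap_zero : arctanGap 0 = -(π / 2) := by
  simp only [arctanGap, zero_mul, arctan_zero, mul_zero, add_zero, arctan_one]
  ring

theorem two_mul_arctan_one_add_sub_pi_div_two_lt {x : ℝ} (hx : 0 < x) :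
    2 * arctan (1 + 2 * x) - π / 2 < √2 * arctan (x * √2) := by
  have h := strictMonoOn_arctanGap self_mem_Ici hx.le hx
  rw [arctanGap_zero, arctanGap] at h
  linarith

lemma pi_div_two_lt_two_mul_arctan_one_add {t : ℝ} (ht : 0 < t) : π / 2 < 2 * arctan (1 + t) := by
  have h := arctan_strictMono (lt_add_of_pos_right 1 ht)
  rw [arctan_one] at h
  linarith

lemma div_eq_abs_div_abs_of_odd {f : ℝ → ℝ} (hf : ∀ t, f (-t) = -f t) {d t : ℝ} (h : 0 < d * t) :
    d / f t = |d| / f |t| := by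
  rcases pos_and_pos_or_neg_and_neg_of_mul_pos h with ⟨hd, ht⟩ | ⟨hd, ht⟩
  · rw [abs_of_pos hd, abs_of_pos ht]
  · rw [abs_of_neg hd, abs_of_neg ht, hf, neg_div_neg_eq]

lemma sub_mul_log_sub_log_pos {a b : ℝ} (ha : 0 < a) (hb : 0 < b) (hab : a ≠ b) :
    0 < (b - a) * (log b - log a) := by
  rcases hab.lt_or_gt with h | h
  · exact mul_pos (sub_pos.2 h) (sub_pos.2 (log_lt_log ha h))
  · exact mul_pos_of_neg_of_neg (sub_neg.2 h) (sub_neg.2 (log_lt_log hb h))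

theorem stmt_12 :
    (∀ x : ℝ, 0 < x →
      2 * Real.arctan (1 + 2 * x) - Real.pi / 2 < Real.sqrt 2 * Real.arctan (x * Real.sqrt 2)) ∧
    (∀ a b : ℝ, 0 < a → 0 < b → a ≠ b →
      (b - a) / (Real.sqrt 2 * Real.arctan ((Real.log b - Real.log a) / Real.sqrt 2)) <
        |b - a| / (2 * Real.arctan (1 + |Real.log b - Real.log a|) - Real.pi / 2)) := by
  refine ⟨fun x hx => two_mul_arctan_one_add_sub_pi_div_two_lt hx, fun a b ha hb hab => ?_⟩
  have hpos := sub_mul_log_sub_log_pos ha hb hab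
  set t := log b - log a
  have ht : 0 < |t| := abs_pos.2 (right_ne_zero_of_mul hpos.ne')
  have hodd : ∀ s, √2 * arctan (-s / √2) = -(√2 * arctan (s / √2)) := fun s => by
    rw [neg_div, arctan_neg, mul_neg]
  rw [div_eq_abs_div_abs_of_odd (f := fun s => √2 * arctan (s / √2)) hodd hpos]
  have hsqrt : |t| / 2 * √2 = |t| / √2 := by
    rw [div_mul_eq_mul_div, div_eq_div_iff two_ne_zero (by positivity), mul_assoc,
      mul_self_sqrt zero_le_two]
  have hlt := two_mul_arctan_one_add_sub_pi_div_two_lt (half_pos ht)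
  rw [mul_div_cancel₀ _ two_ne_zero, hsqrt] at hlt
  exact div_lt_div_of_pos_left (abs_pos.2 (left_ne_zero_of_mul hpos.ne'))
    (sub_pos.2 (pi_div_two_lt_two_mul_arctan_one_add ht)) hlt
end

section
/- Let r > 0 and α ≤ 0 with α + r ≠ 0, and define M_{α,r}(a,b) = (r+α)|b−a| / ((1+r|ln b − ln a|)^{(r+α)/r} − 1) for positive a ≠ b. Then M_{α,r}(a,b) > √(ab) for all positive a ≠ b. -/
/-!
Put `t = |log b - log a| > 0` and `p = (r + α) / r`, so that `p ≤ 1`, `p ≠ 0` and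
`p * (r * t) = (r + α) * t`. Bernoulli's inequality for the exponent `p` gives
`(r + α) * t / ((1 + r * t) ^ p - 1) ≥ 1`; for `p < 0` numerator and denominator are both negative. It therefore suffices that the logarithmic mean
`|b - a| / t` exceeds `√(ab)`, which after writing `a = exp u`, `b = exp v` is `sinh x > x` for `x > 0`.
-/

open Real

lemma one_add_mul_self_le_rpow_one_add_of_nonpos {s : ℝ} (hs : -1 < s) {p : ℝ} (hp : p ≤ 0) :
    1 + p * s ≤ (1 + s) ^ p := by
  have hs' : 0 < 1 + s := by linarith
  have hlog : log (1 + s) ≤ s := by linarith [log_le_sub_one_of_pos hs']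
  rw [rpow_def_of_pos hs', mul_comm (log _) p]
  calc 1 + p * s ≤ 1 + p * log (1 + s) := by nlinarith
    _ ≤ exp (p * log (1 + s)) := by linarith [add_one_le_exp (p * log (1 + s))]

lemma one_le_mul_div_rpow_one_add_sub_one {p y : ℝ} (hp0 : p ≠ 0) (hp1 : p ≤ 1) (hy : 0 < y) :
    1 ≤ p * y / ((1 + y) ^ p - 1) := by
  rcases hp0.lt_or_gt with hp | hp
  · have hD : (1 + y) ^ p - 1 < 0 := by
      linarith [rpow_lt_one_of_one_lt_of_neg (by linarith : 1 < 1 + y) hp]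
    rw [le_div_iff_of_neg hD, one_mul]
    linarith [one_add_mul_self_le_rpow_one_add_of_nonpos (by linarith : -1 < y) hp.le]
  · have hD : 0 < (1 + y) ^ p - 1 := by
      linarith [one_lt_rpow (by linarith : 1 < 1 + y) hp]
    rw [le_div_iff₀ hD, one_mul]
    linarith [rpow_one_add_le_one_add_mul_self (by linarith : -1 ≤ y) hp.le hp1]

lemma abs_lt_abs_sinh {x : ℝ} (hx : x ≠ 0) : |x| < |sinh x| := by
  rw [abs_sinh]
  exact self_lt_sinh_iff.mpr (abs_pos.mpr hx)

lemma exp_sub_exp (u v : ℝ) : exp v - exp u = 2 * exp ((u + v) / 2) * sinh ((v - u) / 2) := by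
  have hv : exp v = exp ((u + v) / 2) * exp ((v - u) / 2) := by rw [← exp_add]; ring_nf
  have hu : exp u = exp ((u + v) / 2) * exp (-((v - u) / 2)) := by rw [← exp_add]; ring_nf
  rw [sinh_eq, hv, hu]
  ring

lemma sqrt_mul_mul_abs_log_sub_lt_abs_sub {a b : ℝ} (ha : 0 < a) (hb : 0 < b) (hab : a ≠ b) :
    √(a * b) * |log b - log a| < |b - a| := by
  set u := log a
  set v := log b
  have hx : (v - u) / 2 ≠ 0 :=
    div_ne_zero (sub_ne_zero.mpr fun h ↦ hab (log_injOn_pos hb ha h).symm) two_ne_zero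
  have hsqrt : √(a * b) = exp ((u + v) / 2) := by
    have : exp (u + v) = exp ((u + v) / 2) * exp ((u + v) / 2) := by rw [← exp_add, add_halves]
    rw [← exp_log ha, ← exp_log hb, ← exp_add, this, sqrt_mul_self (exp_pos _).le]
  have hdiff : |b - a| = 2 * exp ((u + v) / 2) * |sinh ((v - u) / 2)| := by
    rw [← exp_log ha, ← exp_log hb, exp_sub_exp, abs_mul, abs_of_pos (by positivity)]
  have hlog : |v - u| = 2 * |(v - u) / 2| := by
    rw [abs_div, abs_two]; ring
  rw [hsqrt, hdiff, hlog, ← mul_assoc, mul_comm _ (2 : ℝ)]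
  exact mul_lt_mul_of_pos_left (abs_lt_abs_sinh hx) (by positivity)

theorem stmt_13 (r α : ℝ) (hr : 0 < r) (hα : α ≤ 0) (hαr : α + r ≠ 0)
    (a b : ℝ) (ha : 0 < a) (hb : 0 < b) (hab : a ≠ b) :
    (r + α) * |b - a| / ((1 + r * |Real.log b - Real.log a|) ^ ((r + α) / r) - 1) >
      Real.sqrt (a * b) := by
  set t := |log b - log a|
  set D := (1 + r * t) ^ ((r + α) / r) - 1
  have hlog := sqrt_mul_mul_abs_log_sub_lt_abs_sub ha hb hab
  have ht : 0 < t := abs_pos.mpr (sub_ne_zero.mpr fun h ↦ hab (log_injOn_pos hb ha h).symm)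
  have hbern : 1 ≤ (r + α) * t / D := by
    have hp0 : (r + α) / r ≠ 0 := div_ne_zero (by rwa [add_comm]) hr.ne'
    have hp1 : (r + α) / r ≤ 1 := by rw [div_le_one hr]; linarith
    have := one_le_mul_div_rpow_one_add_sub_one hp0 hp1 (mul_pos hr ht)
    rwa [show (r + α) / r * (r * t) = (r + α) * t by field_simp] at this
  calc √(a * b) < |b - a| / t := by rwa [lt_div_iff₀ ht]
    _ ≤ (r + α) * t / D * (|b - a| / t) := le_mul_of_one_le_left (by positivity) hbern
    _ = (r + α) * |b - a| / D := by field_simp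
end

section
/- Let r > 0 and 0 ≤ α ≤ 1, and define M_{α,r}(a,b) = (r+α)|b−a| / ((1+r|ln b − ln a|)^{(r+α)/r} − 1) for positive a ≠ b. Then M_{α,r}(a,b) < (a+b)/2 for all positive a ≠ b. -/
/-!
Bernoulli's inequality gives `(1 + r t) ^ ((r + α) / r) - 1 ≥ (r + α) t` for `t = |log b - log a|`,
so `M_{α,r}(a, b)` is at most the logarithmic mean `|b - a| / |log b - log a|`. The logarithmic mean
lies strictly below the arithmetic mean: with `x = (b - a) / (b + a)` one has
`log b - log a = log (1 + x) - log (1 - x) = 2 (x + x³/3 + x⁵/5 + ⋯)`, which exceeds `2 x` when `x > 0`.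
-/

open Real

lemma two_mul_lt_log_one_add_sub_log_one_sub {x : ℝ} (hx0 : 0 < x) (hx1 : x < 1) :
    2 * x < log (1 + x) - log (1 - x) := by
  have hsum := hasSum_log_sub_log_of_abs_lt_one (abs_lt.2 ⟨by linarith, hx1⟩)
  have hpartial := sum_le_hasSum (Finset.range 2) (fun k _ => by positivity) hsum
  have hcube : 0 < 2 * (1 / 3) * x ^ 3 := by positivity
  norm_num [Finset.sum_range_succ] at hpartial
  linarith

lemma two_mul_sub_lt_add_mul_log_sub_log {a b : ℝ} (ha : 0 < a) (hab : a < b) :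
    2 * (b - a) < (a + b) * (log b - log a) := by
  have hsum : 0 < a + b := by linarith
  set x := (b - a) / (a + b) with hx
  have hx0 : 0 < x := div_pos (by linarith) hsum
  have hx1 : x < 1 := (div_lt_one hsum).2 (by linarith)
  have hratio : (1 + x) / (1 - x) = b / a := by
    rw [div_eq_div_iff (by linarith) ha.ne', hx]
    field_simp
    ring
  have key := two_mul_lt_log_one_add_sub_log_one_sub hx0 hx1
  rw [← log_div (by linarith) (by linarith), hratio, log_div (by linarith) ha.ne', mul_div_assoc',
    div_lt_iff₀ hsum] at key
  linarith

lemma two_mul_abs_sub_lt_add_mul_abs_log_sub_log {a b : ℝ} (ha : 0 < a) (hb : 0 < b)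
    (hab : a ≠ b) : 2 * |b - a| < (a + b) * |log b - log a| := by
  rcases hab.lt_or_gt with hab | hba
  · rw [abs_of_pos (sub_pos.2 hab), abs_of_pos (sub_pos.2 (log_lt_log ha hab))]
    exact two_mul_sub_lt_add_mul_log_sub_log ha hab
  · rw [abs_sub_comm, abs_of_pos (sub_pos.2 hba), abs_sub_comm,
      abs_of_pos (sub_pos.2 (log_lt_log hb hba)), add_comm]
    exact two_mul_sub_lt_add_mul_log_sub_log hb hba

lemma add_mul_le_one_add_mul_rpow_sub_one {r α t : ℝ} (hr : 0 < r) (hα : 0 ≤ α) (ht : 0 ≤ t) :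
    (r + α) * t ≤ (1 + r * t) ^ ((r + α) / r) - 1 := by
  have hp : 1 ≤ (r + α) / r := by rw [le_div_iff₀ hr]; linarith
  have hbernoulli := one_add_mul_self_le_rpow_one_add (s := r * t) (by nlinarith) hp
  rw [show (r + α) / r * (r * t) = (r + α) * t by field_simp] at hbernoulli
  linarith

theorem stmt_14_general (r α : ℝ) (hr : 0 < r) (hα0 : 0 ≤ α)
    (a b : ℝ) (ha : 0 < a) (hb : 0 < b) (hab : a ≠ b) :
    (r + α) * |b - a| / ((1 + r * |Real.log b - Real.log a|) ^ ((r + α) / r) - 1) <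
      (a + b) / 2 := by
  set t := |log b - log a|
  have ht : 0 < t := abs_pos.2 (sub_ne_zero.2 fun h => hab (log_injOn_pos ha hb h.symm))
  have hrα : 0 < r + α := by linarith
  have hbernoulli := add_mul_le_one_add_mul_rpow_sub_one hr hα0 ht.le
  calc (r + α) * |b - a| / ((1 + r * t) ^ ((r + α) / r) - 1)
      ≤ (r + α) * |b - a| / ((r + α) * t) := by gcongr
    _ = |b - a| / t := mul_div_mul_left _ _ hrα.ne'
    _ < (a + b) / 2 := by
      rw [div_lt_div_iff₀ ht two_pos]
      linarith [two_mul_abs_sub_lt_add_mul_abs_log_sub_log ha hb hab]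

theorem stmt_14 (r α : ℝ) (hr : 0 < r) (hα0 : 0 ≤ α) (hα1 : α ≤ 1)
    (a b : ℝ) (ha : 0 < a) (hb : 0 < b) (hab : a ≠ b) :
    (r + α) * |b - a| / ((1 + r * |Real.log b - Real.log a|) ^ ((r + α) / r) - 1) <
      (a + b) / 2 :=
  stmt_14_general r α hr hα0 a b ha hb hab
end

section
/- For every homogeneous symmetric bivariate mean m on positive reals and all a, b > 0, the resultant mean-map satisfies R(A,m,G)(a,b) = A(√a,√b) · m(√a,√b), where R(A,m,G)(a,b) = A(m(a, G(a,b)), m(G(a,b), b)), A is the arithmetic mean and G the geometric mean. -/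
/-! Writing `a = s²`, `b = t²` gives `G(a, b) = s t`, and homogeneity pulls `s` and `t` out of
`m(s², s t)` and `m(s t, t²)`, leaving `(s + t) / 2 · m(s, t)`. -/

lemma resultant_arith_mul_self_eq (m : ℝ → ℝ → ℝ)
    (hhom : ∀ lam a b : ℝ, 0 < lam → 0 < a → 0 < b → m (lam * a) (lam * b) = lam * m a b)
    {s t : ℝ} (hs : 0 < s) (ht : 0 < t) :
    (m (s * s) (s * t) + m (s * t) (t * t)) / 2 = (s + t) / 2 * m s t := by
  rw [hhom s s t hs hs ht, mul_comm s t, hhom t s t ht hs ht]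
  ring

theorem stmt_15_general (m : ℝ → ℝ → ℝ)
    (hhom : ∀ lam a b : ℝ, 0 < lam → 0 < a → 0 < b → m (lam * a) (lam * b) = lam * m a b)
    (a b : ℝ) (ha : 0 < a) (hb : 0 < b) :
    (m a (Real.sqrt (a * b)) + m (Real.sqrt (a * b)) b) / 2 =
      (Real.sqrt a + Real.sqrt b) / 2 * m (Real.sqrt a) (Real.sqrt b) := by
  have h := resultant_arith_mul_self_eq m hhom (Real.sqrt_pos.2 ha) (Real.sqrt_pos.2 hb)
  rwa [Real.mul_self_sqrt ha.le, Real.mul_self_sqrt hb.le, ← Real.sqrt_mul ha.le] at h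

theorem stmt_15 (m : ℝ → ℝ → ℝ)
    (hmean : ∀ a b : ℝ, 0 < a → 0 < b → min a b ≤ m a b ∧ m a b ≤ max a b)
    (hsymm : ∀ a b : ℝ, 0 < a → 0 < b → m a b = m b a)
    (hhom : ∀ lam a b : ℝ, 0 < lam → 0 < a → 0 < b → m (lam * a) (lam * b) = lam * m a b)
    (a b : ℝ) (ha : 0 < a) (hb : 0 < b) :
    (m a (Real.sqrt (a * b)) + m (Real.sqrt (a * b)) b) / 2 =
      (Real.sqrt a + Real.sqrt b) / 2 * m (Real.sqrt a) (Real.sqrt b) :=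
  stmt_15_general m hhom a b ha hb
end

section
/- R(A,L,G) = L and R(H,L,A) = L, i.e., for all positive a ≠ b: A(L(a,√(ab)), L(√(ab),b)) = L(a,b) and H(L(a,A(a,b)), L(A(a,b),b)) = L(a,b), where L(a,b) = (b−a)/(ln b − ln a) is the logarithmic mean, A the arithmetic mean, G the geometric mean, and H(a,b) = 2ab/(a+b) the harmonic mean. -/
/-!
Write `L u v = (v - u) / (log v - log u)`. Since `log √(ab)` is the midpoint of `log a` and
`log b`, the two pieces `L(a, √(ab))` and `L(√(ab), b)` share the denominator
`(log b - log a) / 2`, so their sum is `2 L(a, b)`. Dually, `(a + b) / 2` is the midpoint of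
`a` and `b`, so `1 / L(a, (a+b)/2)` and `1 / L((a+b)/2, b)` share the denominator `(b - a) / 2`
and add up to `2 / L(a, b)`; this says exactly that their harmonic mean is `L(a, b)`.
-/

open Real

noncomputable def logMean (u v : ℝ) : ℝ := (v - u) / (log v - log u)

lemma logMean_pos {u v : ℝ} (hu : 0 < u) (hv : 0 < v) (huv : u ≠ v) : 0 < logMean u v := by
  rcases huv.lt_or_gt with h | h
  · exact div_pos (sub_pos.2 h) (sub_pos.2 (log_lt_log hu h))
  · exact div_pos_of_neg_of_neg (sub_neg.2 h) (sub_neg.2 (log_lt_log hv h))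

lemma logMean_add_logMean_of_log_midpoint {u m v : ℝ} (hm : log m - log u = log v - log m) :
    logMean u m + logMean m v = 2 * logMean u v := by
  have hlog : log v - log u = 2 * (log m - log u) := by linarith
  rw [logMean, logMean, logMean, ← hm, ← add_div, sub_add_sub_cancel', hlog, ← mul_div_assoc,
    mul_div_mul_left _ _ two_ne_zero]

lemma inv_logMean_add_inv_logMean_of_midpoint {u m v : ℝ} (hm : m - u = v - m) :
    (logMean u m)⁻¹ + (logMean m v)⁻¹ = 2 * (logMean u v)⁻¹ := by
  have hsub : v - u = 2 * (m - u) := by linarith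
  rw [logMean, logMean, logMean, inv_div, inv_div, inv_div, ← hm, ← add_div, sub_add_sub_cancel',
    hsub, ← mul_div_assoc, mul_div_mul_left _ _ two_ne_zero]

lemma harmonic_mean_eq_of_inv_add_inv {x y z : ℝ} (hx : x ≠ 0) (hy : y ≠ 0)
    (h : x⁻¹ + y⁻¹ = 2 * z⁻¹) : 2 * x * y / (x + y) = z := by
  have hsum : x + y = 2 * x * y * z⁻¹ := by
    calc x + y = x * y * (x⁻¹ + y⁻¹) := by field_simp; ring
      _ = 2 * x * y * z⁻¹ := by rw [h]; ring
  rcases eq_or_ne z 0 with rfl | hz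
  · simp [hsum]
  · rw [hsum]
    field_simp

lemma log_sqrt_mul_midpoint {a b : ℝ} (ha : 0 < a) (hb : 0 < b) :
    log √(a * b) - log a = log b - log √(a * b) := by
  rw [log_sqrt (mul_pos ha hb).le, log_mul ha.ne' hb.ne']
  ring

theorem stmt_18 (a b : ℝ) (ha : 0 < a) (hb : 0 < b) (hab : a ≠ b) :
    (let L : ℝ → ℝ → ℝ := fun u v => (v - u) / (Real.log v - Real.log u);
     let g := Real.sqrt (a * b);
     let A := (a + b) / 2;
     (L a g + L g b) / 2 = L a b ∧
       2 * (L a A) * (L A b) / (L a A + L A b) = L a b) := by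
  intro L g A
  show (logMean a g + logMean g b) / 2 = logMean a b ∧
    2 * logMean a A * logMean A b / (logMean a A + logMean A b) = logMean a b
  have hA : 0 < A := by positivity
  have haA : a ≠ A := by intro h; apply hab; linarith [show A = (a + b) / 2 from rfl]
  have hAb : A ≠ b := by intro h; apply hab; linarith [show A = (a + b) / 2 from rfl]
  refine ⟨?_, ?_⟩
  · rw [logMean_add_logMean_of_log_midpoint (log_sqrt_mul_midpoint ha hb)]
    ring
  · exact harmonic_mean_eq_of_inv_add_inv (logMean_pos ha hA haA).ne' (logMean_pos hA hb hAb).ne'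
      (inv_logMean_add_inv_logMean_of_midpoint (by ring))
end

section
/- The arithmetic mean A is not comparable to the mean M_1: there exist positive pairs (a,b) and (a',b') with a≠b, a'≠b' such that A(a,b) < M_1(a,b) and A(a',b') > M_1(a',b'), where M_1(a,b) = |b−a|/ln(1+|ln b − ln a|). Equivalently, the function g(x) = ln(1+2x) − 2·tanh(x) satisfies g(2) < 0 and g(x) > 0 for some x > 2. -/
/-!
At `a = e^{-x}`, `b = e^{x}` one has `A(a, b) = cosh x` and `M₁(a, b) = 2 sinh x / ln(1 + 2x)`, so
`M₁ = A · 2 tanh x / ln(1 + 2x)` and `A < M₁` exactly when `g(x) = ln(1 + 2x) - 2 tanh x < 0`.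
Now `g(2) = ln 5 - 2 tanh 2 < 0` numerically, while `g` becomes positive as soon as `ln(1 + 2x) ≥ 2`,
since `tanh < 1`.
-/

open Real

/-- The mean `M₁` of the paper. -/
noncomputable def logMeanOne (a b : ℝ) : ℝ := |b - a| / log (1 + |log b - log a|)

lemma exp_neg_ne_exp {x : ℝ} (hx : 0 < x) : exp (-x) ≠ exp x :=
  (exp_lt_exp.2 (by linarith)).ne

lemma logMeanOne_exp_neg_exp {x : ℝ} (hx : 0 < x) :
    logMeanOne (exp (-x)) (exp x) = (exp (-x) + exp x) / 2 * (2 * tanh x / log (1 + 2 * x)) := by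
  have hsub : 0 < exp x - exp (-x) := sub_pos.2 (exp_lt_exp.2 (by linarith))
  have hlog : 0 < log (1 + 2 * x) := log_pos (by linarith)
  rw [logMeanOne, log_exp, log_exp, abs_of_pos hsub, show x - -x = 2 * x by ring,
    abs_of_pos (by linarith), tanh_eq]
  field_simp
  ring

lemma arithMean_lt_logMeanOne_iff {x : ℝ} (hx : 0 < x) :
    (exp (-x) + exp x) / 2 < logMeanOne (exp (-x)) (exp x) ↔ log (1 + 2 * x) < 2 * tanh x := by
  rw [logMeanOne_exp_neg_exp hx, lt_mul_iff_one_lt_right (by positivity),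
    one_lt_div (log_pos (by linarith))]

lemma logMeanOne_lt_arithMean_iff {x : ℝ} (hx : 0 < x) :
    logMeanOne (exp (-x)) (exp x) < (exp (-x) + exp x) / 2 ↔ 2 * tanh x < log (1 + 2 * x) := by
  rw [logMeanOne_exp_neg_exp hx, mul_lt_iff_lt_one_right (by positivity),
    div_lt_one (log_pos (by linarith))]

lemma log_five_lt : log 5 < 1.64 := by
  have hsplit : log (5 : ℝ) = 2 * log 2 + log (5 / 4) := by
    rw [two_mul, ← log_mul two_ne_zero two_ne_zero, ← log_mul (by norm_num) (by norm_num)]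
    norm_num
  have hquarter : log (5 / 4 : ℝ) ≤ 5 / 4 - 1 := log_le_sub_one_of_pos (by norm_num)
  linarith [log_two_lt_d9]

lemma log_five_lt_two_mul_tanh_two : log 5 < 2 * tanh 2 := by
  have hexp : 13 ≤ exp 4 := by
    have := quadratic_le_exp_of_nonneg (x := 4) (by norm_num)
    norm_num at this
    linarith
  have htanh : tanh 2 = (exp 4 - 1) / (exp 4 + 1) := by
    rw [tanh_eq, show (4 : ℝ) = 2 + 2 by norm_num, exp_add, exp_neg]
    field_simp
  have hbound : 6 / 7 ≤ tanh 2 := by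
    rw [htanh, le_div_iff₀ (by linarith)]
    linarith
  linarith [log_five_lt]

lemma two_mul_tanh_lt_log_of_two_le_log {x : ℝ} (h : 2 ≤ log (1 + 2 * x)) :
    2 * tanh x < log (1 + 2 * x) := by
  linarith [tanh_lt_one x]

theorem stmt_19 :
    (∃ a b : ℝ, 0 < a ∧ 0 < b ∧ a ≠ b ∧
      (a + b) / 2 < |b - a| / Real.log (1 + |Real.log b - Real.log a|)) ∧
    (∃ a b : ℝ, 0 < a ∧ 0 < b ∧ a ≠ b ∧
      |b - a| / Real.log (1 + |Real.log b - Real.log a|) < (a + b) / 2) ∧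
    (Real.log (1 + 2 * 2) - 2 * Real.tanh 2 < 0) ∧
    (∃ x : ℝ, 2 < x ∧ 0 < Real.log (1 + 2 * x) - 2 * Real.tanh x) := by
  have hg₂ : log (1 + 2 * 2) < 2 * tanh 2 := by
    norm_num
    exact log_five_lt_two_mul_tanh_two
  -- a point where `ln(1 + 2x) = 3`
  set x₀ := (exp 3 - 1) / 2 with hx₀_def
  have hx₀ : 2 < x₀ := by
    have := quadratic_le_exp_of_nonneg (x := 3) (by norm_num)
    linarith
  have hgx₀ : 2 * tanh x₀ < log (1 + 2 * x₀) := by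
    apply two_mul_tanh_lt_log_of_two_le_log
    rw [show 1 + 2 * x₀ = exp 3 by rw [hx₀_def]; ring, log_exp]
    norm_num
  exact ⟨⟨exp (-2), exp 2, exp_pos _, exp_pos _, exp_neg_ne_exp two_pos,
      (arithMean_lt_logMeanOne_iff two_pos).2 hg₂⟩,
    ⟨exp (-x₀), exp x₀, exp_pos _, exp_pos _, exp_neg_ne_exp (by linarith),
      (logMeanOne_lt_arithMean_iff (by linarith)).2 hgx₀⟩,
    sub_neg.2 hg₂, x₀, hx₀, sub_pos.2 hgx₀⟩
end
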